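/- arXiv:math/0608547 — 7 statements merged into one kernel-verified Lean document; each statement's English description precedes it below -/
import Mathlib

section
/- Let a1, a2, b1, b2, b12, c2, d2, a be positive real numbers, n a positive integer, and let f(x) = x^n/(a^n + x^n) be the Hill function. Suppose b2^2 < b1 and suppose y10 ∈ (0, a1*b1/(a2*b2)) satisfies α*y10^(n+1) − β*y10^n + γ*y10 − δ = 0, where α = a2*(b12 + b2*c2*d2), β = a1*b1*c2*d2, γ = a2*b2*c2*d2*a^n, δ = a1*b1*c2*d2*a^n. Then, setting x10 = a1/a2, y20 = (a1*b1 − a2*b2*y10)/(b12*y10*a2), and x20 = d2*y20, the point (x10, y10, x20, y20) is an equilibrium of the P53-Mdm2 system, i.e. a1 − a2*x10 = 0, b1*x10 − b2*y10 − b12*y10*y20 = 0, f(y10) − c2*x20 = 0, and x20 − d2*y20 = 0. -/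
/-!
The first and fourth equations hold by the choice of `x10` and `x20`, and `y20` is obtained by
solving the second one for `y20`. For the third, the root condition on `y10` rearranges to
`a2 * b12 * y10 ^ (n + 1) + c2 * d2 * (a2 * b2 * y10 - a1 * b1) * (a ^ n + y10 ^ n) = 0`,
which is `f y10 = c2 * d2 * y20` with the denominators cleared.
-/

theorem p53_root_poly_eq (a1 a2 b1 b2 b12 c2 d2 a y : ℝ) (n : ℕ) :
    a2 * (b12 + b2 * c2 * d2) * y ^ (n + 1) - a1 * b1 * c2 * d2 * y ^ n
        + a2 * b2 * c2 * d2 * a ^ n * y - a1 * b1 * c2 * d2 * a ^ n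
      = a2 * b12 * y * y ^ n - c2 * d2 * (a1 * b1 - a2 * b2 * y) * (a ^ n + y ^ n) := by
  ring

section P53Mdm2Equilibrium

variable {a1 a2 b1 b2 b12 c2 d2 a y : ℝ} {n : ℕ}

theorem hill_eq_of_p53_root (ha2 : a2 ≠ 0) (hb12 : b12 ≠ 0) (hy : y ≠ 0)
    (hden : a ^ n + y ^ n ≠ 0)
    (hroot : a2 * (b12 + b2 * c2 * d2) * y ^ (n + 1) - a1 * b1 * c2 * d2 * y ^ n
        + a2 * b2 * c2 * d2 * a ^ n * y - a1 * b1 * c2 * d2 * a ^ n = 0) :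
    y ^ n / (a ^ n + y ^ n) = c2 * d2 * ((a1 * b1 - a2 * b2 * y) / (b12 * y * a2)) := by
  rw [p53_root_poly_eq, sub_eq_zero] at hroot
  field_simp
  linear_combination hroot

theorem mdm2_balance (ha2 : a2 ≠ 0) (hb12 : b12 ≠ 0) (hy : y ≠ 0) :
    b1 * (a1 / a2) - b2 * y - b12 * y * ((a1 * b1 - a2 * b2 * y) / (b12 * y * a2)) = 0 := by
  field_simp
  ring

end P53Mdm2Equilibrium

theorem stmt_0_general (a1 a2 b1 b2 b12 c2 d2 a : ℝ) (n : ℕ)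
    (ha2 : 0 < a2)
    (hb12 : 0 < b12) (ha : 0 < a)
    (f : ℝ → ℝ) (hf : ∀ x, f x = x ^ n / (a ^ n + x ^ n))
    (y10 : ℝ) (hy10pos : 0 < y10)
    (hroot : a2 * (b12 + b2 * c2 * d2) * y10 ^ (n + 1)
        - a1 * b1 * c2 * d2 * y10 ^ n
        + a2 * b2 * c2 * d2 * a ^ n * y10
        - a1 * b1 * c2 * d2 * a ^ n = 0)
    (x10 y20 x20 : ℝ)
    (hx10 : x10 = a1 / a2)
    (hy20 : y20 = (a1 * b1 - a2 * b2 * y10) / (b12 * y10 * a2))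
    (hx20 : x20 = d2 * y20) :
    a1 - a2 * x10 = 0 ∧
    b1 * x10 - b2 * y10 - b12 * y10 * y20 = 0 ∧
    f y10 - c2 * x20 = 0 ∧
    x20 - d2 * y20 = 0 := by
  subst hx10 hy20 hx20
  have hden : a ^ n + y10 ^ n ≠ 0 := by positivity
  refine ⟨by field_simp; ring, mdm2_balance ha2.ne' hb12.ne' hy10pos.ne', ?_, sub_self _⟩
  rw [hf, hill_eq_of_p53_root ha2.ne' hb12.ne' hy10pos.ne' hden hroot, mul_assoc, sub_self]

/-- Equilibrium of the P53-Mdm2 system. -/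
theorem stmt_0 (a1 a2 b1 b2 b12 c2 d2 a : ℝ) (n : ℕ)
    (ha1 : 0 < a1) (ha2 : 0 < a2) (hb1 : 0 < b1) (hb2 : 0 < b2)
    (hb12 : 0 < b12) (hc2 : 0 < c2) (hd2 : 0 < d2) (ha : 0 < a) (hn : 0 < n)
    (f : ℝ → ℝ) (hf : ∀ x, f x = x ^ n / (a ^ n + x ^ n))
    (hb2b1 : b2 ^ 2 < b1)
    (y10 : ℝ) (hy10pos : 0 < y10) (hy10lt : y10 < a1 * b1 / (a2 * b2))
    (hroot : a2 * (b12 + b2 * c2 * d2) * y10 ^ (n + 1)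
        - a1 * b1 * c2 * d2 * y10 ^ n
        + a2 * b2 * c2 * d2 * a ^ n * y10
        - a1 * b1 * c2 * d2 * a ^ n = 0)
    (x10 y20 x20 : ℝ)
    (hx10 : x10 = a1 / a2)
    (hy20 : y20 = (a1 * b1 - a2 * b2 * y10) / (b12 * y10 * a2))
    (hx20 : x20 = d2 * y20) :
    a1 - a2 * x10 = 0 ∧
    b1 * x10 - b2 * y10 - b12 * y10 * y20 = 0 ∧
    f y10 - c2 * x20 = 0 ∧
    x20 - d2 * y20 = 0 :=
  stmt_0_general a1 a2 b1 b2 b12 c2 d2 a n ha2 hb12 ha f hf y10 hy10pos hroot x10 y20 x20 hx10 hy20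
    hx20
end

section
/- Let a1, a2, b1, b2, b12, c2, d2, a be positive real numbers and n a positive integer. Define α = a2*(b12 + b2*c2*d2), β = a1*b1*c2*d2, γ = a2*b2*c2*d2*a^n, δ = a1*b1*c2*d2*a^n. Then the polynomial g(x) = α*x^(n+1) − β*x^n + γ*x − δ has a root y10 in the open interval (0, a1*b1/(a2*b2)). (Indeed g(0) = −δ < 0 and g(a1*b1/(a2*b2)) = (a1*b1/(a2*b2))^n * a1*b1*b12/b2 > 0.) -/
/-!
The equilibrium polynomial `g(x) = α x^(n+1) - β x^n + γ x - δ` is negative at `0`. At a point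
`r > 0` with `γ r = δ` it factors as `r^n (α r - β)`, which is positive once `β < α r`; the
intermediate value theorem then gives a root in `(0, r)`. For the P53-Mdm2 coefficients
`r = a1 b1 / (a2 b2)` satisfies both conditions, with `α r - β = a2 b12 r`.
-/

open Set

def equilibriumPoly (α β γ δ : ℝ) (n : ℕ) (x : ℝ) : ℝ :=
  α * x ^ (n + 1) - β * x ^ n + γ * x - δ

namespace equilibriumPoly

variable {α β γ δ : ℝ} {n : ℕ}

theorem continuous : Continuous (equilibriumPoly α β γ δ n) := by
  unfold equilibriumPoly
  fun_prop

theorem zero_neg (hβ : 0 ≤ β) (hδ : 0 < δ) : equilibriumPoly α β γ δ n 0 < 0 := by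
  have hpow : 0 ≤ β * (0 : ℝ) ^ n := mul_nonneg hβ (pow_nonneg le_rfl n)
  simp only [equilibriumPoly, zero_pow n.succ_ne_zero, mul_zero]
  linarith

theorem eq_of_mul_eq {r : ℝ} (h : γ * r = δ) :
    equilibriumPoly α β γ δ n r = r ^ n * (α * r - β) := by
  rw [equilibriumPoly, ← h]
  ring

theorem exists_root_mem_Ioo {r : ℝ} (hr : 0 < r) (hβ : 0 ≤ β) (hδ : 0 < δ)
    (hγ : γ * r = δ) (hαβ : β < α * r) :
    ∃ x ∈ Ioo 0 r, equilibriumPoly α β γ δ n x = 0 := by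
  have hpos : 0 < equilibriumPoly α β γ δ n r := by
    rw [eq_of_mul_eq hγ]
    exact mul_pos (pow_pos hr n) (sub_pos.mpr hαβ)
  exact intermediate_value_Ioo hr.le continuous.continuousOn ⟨zero_neg hβ hδ, hpos⟩

end equilibriumPoly

theorem stmt_1_general (a1 a2 b1 b2 b12 c2 d2 a : ℝ) (n : ℕ)
    (ha1 : 0 < a1) (ha2 : 0 < a2) (hb1 : 0 < b1) (hb2 : 0 < b2)
    (hb12 : 0 < b12) (hc2 : 0 < c2) (hd2 : 0 < d2) (ha : 0 < a) :
    ∃ y10 : ℝ, 0 < y10 ∧ y10 < a1 * b1 / (a2 * b2) ∧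
      a2 * (b12 + b2 * c2 * d2) * y10 ^ (n + 1)
        - a1 * b1 * c2 * d2 * y10 ^ n
        + a2 * b2 * c2 * d2 * a ^ n * y10
        - a1 * b1 * c2 * d2 * a ^ n = 0 := by
  set r := a1 * b1 / (a2 * b2)
  have hr : 0 < r := by positivity
  have hrb : a2 * b2 * r = a1 * b1 := by
    simp only [r]
    field_simp
  have hγ : a2 * b2 * c2 * d2 * a ^ n * r = a1 * b1 * c2 * d2 * a ^ n := by
    rw [← hrb]
    ring
  have hαβ : a1 * b1 * c2 * d2 < a2 * (b12 + b2 * c2 * d2) * r := by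
    have hα : a2 * (b12 + b2 * c2 * d2) * r = a2 * b12 * r + a1 * b1 * c2 * d2 := by
      rw [← hrb]
      ring
    rw [hα]
    linarith [mul_pos (mul_pos ha2 hb12) hr]
  obtain ⟨x, ⟨hx0, hxr⟩, hroot⟩ :=
    equilibriumPoly.exists_root_mem_Ioo (n := n) hr (by positivity) (by positivity) hγ hαβ
  exact ⟨x, hx0, hxr, hroot⟩

/-- The equilibrium polynomial has a root in (0, a1*b1/(a2*b2)). -/
theorem stmt_1 (a1 a2 b1 b2 b12 c2 d2 a : ℝ) (n : ℕ)
    (ha1 : 0 < a1) (ha2 : 0 < a2) (hb1 : 0 < b1) (hb2 : 0 < b2)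
    (hb12 : 0 < b12) (hc2 : 0 < c2) (hd2 : 0 < d2) (ha : 0 < a) (hn : 0 < n) :
    ∃ y10 : ℝ, 0 < y10 ∧ y10 < a1 * b1 / (a2 * b2) ∧
      a2 * (b12 + b2 * c2 * d2) * y10 ^ (n + 1)
        - a1 * b1 * c2 * d2 * y10 ^ n
        + a2 * b2 * c2 * d2 * a ^ n * y10
        - a1 * b1 * c2 * d2 * a ^ n = 0 :=
  stmt_1_general a1 a2 b1 b2 b12 c2 d2 a n ha1 ha2 hb1 hb2 hb12 hc2 hd2 ha
end

section
/- Let p2, p1, p0, r be positive real numbers with p1*p2 > p0 + r. Then there exists τ̄ > 0 such that for every τ ∈ [0, τ̄], every complex number λ satisfying λ³ + p2*λ² + p1*λ + p0 + r*e^{−λτ} = 0 has negative real part. -/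
/-!
At `τ = 0` the characteristic function is the cubic `P z = z³ + p₂z² + p₁z + (p₀ + r)`, whose
roots lie in the open left half-plane by the Routh–Hurwitz condition `p₀ + r < p₁p₂`. A root `z`
with `0 ≤ Re z` of the delayed equation satisfies `‖z‖ ≤ M := 1 + p₂ + p₁ + p₀ + r` (Cauchy's
bound, as `‖e^{-zτ}‖ ≤ 1` there) and `P z = r (1 - e^{-zτ})`. On the compact set
`{‖z‖ ≤ M, 0 ≤ Re z}` the cubic `P` is bounded below by some `δ > 0`, while
`‖r (1 - e^{-zτ})‖ ≤ 2rMτ`, which is `< δ` for small `τ`.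
-/

open Complex Metric

theorem re_neg_of_cubic_eq_zero {a b c : ℝ} (ha : 0 < a) (hb : 0 < b) (hc : 0 < c)
    (habc : c < a * b) {z : ℂ} (hz : z ^ 3 + a * z ^ 2 + b * z + c = 0) : z.re < 0 := by
  obtain ⟨x, y⟩ := z
  by_contra! hx
  simp only [Complex.ext_iff, add_re, add_im, mul_re, mul_im, ofReal_re, ofReal_im, pow_succ,
    pow_zero, one_mul, zero_re, zero_im] at hz hx
  obtain ⟨hre, him⟩ := hz
  ring_nf at hre him
  rcases eq_or_ne y 0 with rfl | hy
  · nlinarith [mul_nonneg hx hb.le, mul_nonneg (mul_nonneg hx hx) ha.le, pow_nonneg hx 3]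
  · -- the imaginary part of the equation pins down `y²`, which turns the real part into a
    -- cubic in `x` with positive coefficients
    have hy2 : y ^ 2 = 3 * x ^ 2 + 2 * a * x + b :=
      mul_left_cancel₀ hy (by linear_combination -him)
    rw [hy2] at hre
    nlinarith [pow_nonneg hx 3, mul_nonneg hx hb.le, mul_nonneg (mul_nonneg hx hx) ha.le,
      mul_nonneg hx (mul_pos ha ha).le]

theorem norm_le_of_cubic_eq_zero {a b w z : ℂ} (hz : z ^ 3 + a * z ^ 2 + b * z + w = 0) :
    ‖z‖ ≤ 1 + ‖a‖ + ‖b‖ + ‖w‖ := by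
  rcases le_or_gt ‖z‖ 1 with h1 | h1
  · linarith [norm_nonneg a, norm_nonneg b, norm_nonneg w]
  have hcube : ‖z‖ ^ 3 ≤ (‖a‖ + ‖b‖ + ‖w‖) * ‖z‖ ^ 2 := calc
    ‖z‖ ^ 3 = ‖a * z ^ 2 + b * z + w‖ := by
      rw [← norm_pow, ← norm_neg]; congr 1; linear_combination -hz
    _ ≤ ‖a‖ * ‖z‖ ^ 2 + ‖b‖ * ‖z‖ + ‖w‖ := by
      refine (norm_add₃_le).trans ?_
      simp only [norm_mul, norm_pow, le_refl]
    _ ≤ (‖a‖ + ‖b‖ + ‖w‖) * ‖z‖ ^ 2 := by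
      have : ‖z‖ ≤ ‖z‖ ^ 2 := by nlinarith
      nlinarith [norm_nonneg a, norm_nonneg b, norm_nonneg w]
  have : ‖z‖ ≤ ‖a‖ + ‖b‖ + ‖w‖ :=
    le_of_mul_le_mul_right (by linarith) (by positivity : 0 < ‖z‖ ^ 2)
  linarith

theorem norm_exp_neg_mul_le_one {z : ℂ} {τ : ℝ} (hz : 0 ≤ z.re) (hτ : 0 ≤ τ) :
    ‖exp (-z * τ)‖ ≤ 1 := by
  rw [norm_exp, Real.exp_le_one_iff]
  simpa using mul_nonneg hz hτ

theorem norm_one_sub_exp_neg_mul_le {z : ℂ} {τ : ℝ} (hτ : 0 ≤ τ) (h : ‖z‖ * τ ≤ 1) :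
    ‖1 - exp (-z * τ)‖ ≤ 2 * ‖z‖ * τ := by
  have hw : ‖-z * τ‖ = ‖z‖ * τ := by
    rw [norm_mul, norm_neg, norm_real, Real.norm_of_nonneg hτ]
  rw [norm_sub_rev, mul_assoc, ← hw]
  exact norm_exp_sub_one_le (hw ▸ h)

section DelayRoot

variable {p2 p1 p0 r τ : ℝ} {z : ℂ}

theorem norm_le_of_delay_root (hp2 : 0 ≤ p2) (hp1 : 0 ≤ p1) (hp0 : 0 ≤ p0) (hr : 0 ≤ r)
    (hτ : 0 ≤ τ) (hre : 0 ≤ z.re)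
    (hz : z ^ 3 + p2 * z ^ 2 + p1 * z + p0 + r * exp (-z * τ) = 0) :
    ‖z‖ ≤ 1 + p2 + p1 + (p0 + r) := by
  have hw : ‖(p0 : ℂ) + r * exp (-z * τ)‖ ≤ p0 + r := by
    refine (norm_add_le _ _).trans ?_
    rw [norm_mul, norm_real, norm_real, Real.norm_of_nonneg hp0, Real.norm_of_nonneg hr]
    gcongr
    exact mul_le_of_le_one_right hr (norm_exp_neg_mul_le_one hre hτ)
  have := norm_le_of_cubic_eq_zero (a := p2) (b := p1) (w := p0 + r * exp (-z * τ)) (z := z)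
    (by linear_combination hz)
  rw [norm_real, norm_real, Real.norm_of_nonneg hp2, Real.norm_of_nonneg hp1] at this
  linarith

theorem norm_cubic_le_of_delay_root (hr : 0 ≤ r) (hτ : 0 ≤ τ) (hzτ : ‖z‖ * τ ≤ 1)
    (hz : z ^ 3 + p2 * z ^ 2 + p1 * z + p0 + r * exp (-z * τ) = 0) :
    ‖z ^ 3 + p2 * z ^ 2 + p1 * z + (p0 + r)‖ ≤ 2 * r * ‖z‖ * τ := calc
  ‖z ^ 3 + p2 * z ^ 2 + p1 * z + (p0 + r)‖ = r * ‖1 - exp (-z * τ)‖ := by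
    rw [show z ^ 3 + p2 * z ^ 2 + p1 * z + (p0 + r) = r * (1 - exp (-z * τ)) by
      linear_combination hz, norm_mul, norm_real, Real.norm_of_nonneg hr]
  _ ≤ r * (2 * ‖z‖ * τ) := by gcongr; exact norm_one_sub_exp_neg_mul_le hτ hzτ
  _ = 2 * r * ‖z‖ * τ := by ring

end DelayRoot

/-- Stability persists for all sufficiently small delays. -/
theorem stmt_4 (p2 p1 p0 r : ℝ) (hp2 : 0 < p2) (hp1 : 0 < p1) (hp0 : 0 < p0)
    (hr : 0 < r) (h : p1 * p2 > p0 + r) :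
    ∃ τbar : ℝ, 0 < τbar ∧ ∀ τ : ℝ, τ ∈ Set.Icc (0 : ℝ) τbar →
      ∀ z : ℂ, z ^ 3 + p2 * z ^ 2 + p1 * z + p0 + r * Complex.exp (-z * τ) = 0 →
        z.re < 0 := by
  set M := 1 + p2 + p1 + (p0 + r)
  have hM : 0 < M := by positivity
  obtain ⟨δ, hδ, hPδ⟩ : ∃ δ, 0 < δ ∧ ∀ z ∈ closedBall 0 M ∩ {z : ℂ | 0 ≤ z.re},
      δ ≤ ‖z ^ 3 + p2 * z ^ 2 + p1 * z + (p0 + r)‖ :=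
    ((isCompact_closedBall 0 M).inter_right (isClosed_le continuous_const continuous_re))
      |>.exists_forall_le' (by fun_prop) fun z hz ↦ norm_pos_iff.2 fun h0 ↦
        (re_neg_of_cubic_eq_zero hp2 hp1 (by positivity) (by linarith) (c := p0 + r)
          (by push_cast; exact h0)).not_ge hz.2
  refine ⟨min (1 / M) (δ / (4 * r * M)), by positivity, ?_⟩
  rintro τ ⟨hτ0, hτ⟩ z hz
  by_contra! hre
  have hzM := norm_le_of_delay_root hp2.le hp1.le hp0.le hr.le hτ0 hre hz
  have hτM : τ * M ≤ 1 := (le_div_iff₀ hM).1 (hτ.trans (min_le_left _ _))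
  have hτδ : τ * (4 * r * M) ≤ δ := (le_div_iff₀ (by positivity)).1 (hτ.trans (min_le_right _ _))
  have hlow := hPδ z ⟨mem_closedBall_zero_iff.2 hzM, hre⟩
  have hup := norm_cubic_le_of_delay_root hr.le hτ0 (by nlinarith) hz
  nlinarith [mul_le_mul_of_nonneg_left hzM (by positivity : 0 ≤ 2 * r * τ)]
end

section
/- Let p2, p1, p0 be real numbers and r a nonzero real number. If ω0 > 0 satisfies ω0⁶ + (p2² − 2*p1)*ω0⁴ + (p1² − 2*p0*p2)*ω0² + p0² − r² = 0, then there exists τ0 ∈ [0, 2π/ω0) such that r*cos(ω0*τ0) = p2*ω0² − p0 and r*sin(ω0*τ0) = p1*ω0 − ω0³; equivalently, λ = iω0 is a root of λ³ + p2*λ² + p1*λ + p0 + r*e^{−λτ0} = 0. -/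
open Real Complex

lemma exists_mem_Ico_cos_eq_sin_eq {x y : ℝ} (h : x ^ 2 + y ^ 2 = 1) :
    ∃ θ ∈ Set.Ico 0 (2 * π), Real.cos θ = x ∧ Real.sin θ = y := by
  set z : ℂ := ⟨x, y⟩
  have hz : ‖z‖ = 1 := by
    rw [Complex.norm_def, Real.sqrt_eq_one, Complex.normSq_apply]
    linear_combination h
  have hz0 : z ≠ 0 := norm_ne_zero_iff.mp (by rw [hz]; exact one_ne_zero)
  -- Reduce `arg z ∈ (-π, π]` modulo `2π` into `[0, 2π)`.
  refine ⟨toIcoMod two_pi_pos 0 (arg z), toIcoMod_mem_Ico' _ _, ?_, ?_⟩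
  · rw [← self_sub_toIcoDiv_zsmul, zsmul_eq_mul, Real.cos_sub_int_mul_two_pi, cos_arg hz0, hz,
      div_one]
  · rw [← self_sub_toIcoDiv_zsmul, zsmul_eq_mul, Real.sin_sub_int_mul_two_pi, sin_arg, hz,
      div_one]

lemma exists_mem_Ico_mul_cos_eq_mul_sin_eq {r x y : ℝ} (h : x ^ 2 + y ^ 2 = r ^ 2) :
    ∃ θ ∈ Set.Ico 0 (2 * π), r * Real.cos θ = x ∧ r * Real.sin θ = y := by
  rcases eq_or_ne r 0 with rfl | hr
  · have hx : x = 0 := by nlinarith [sq_nonneg x, sq_nonneg y]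
    have hy : y = 0 := by nlinarith [sq_nonneg x, sq_nonneg y]
    exact ⟨0, ⟨le_rfl, two_pi_pos⟩, by simp [hx], by simp [hy]⟩
  obtain ⟨θ, hθ, hcos, hsin⟩ :
      ∃ θ ∈ Set.Ico 0 (2 * π), Real.cos θ = x / r ∧ Real.sin θ = y / r := by
    refine exists_mem_Ico_cos_eq_sin_eq ?_
    rw [div_pow, div_pow, ← add_div, h, div_self (pow_ne_zero 2 hr)]
  exact ⟨θ, hθ, by rw [hcos, mul_div_cancel₀ x hr], by rw [hsin, mul_div_cancel₀ y hr]⟩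

lemma exists_mem_Ico_mul_eq {ω θ : ℝ} (hω : 0 < ω) (hθ : θ ∈ Set.Ico 0 (2 * π)) :
    ∃ τ ∈ Set.Ico 0 (2 * π / ω), ω * τ = θ :=
  ⟨θ / ω, ⟨div_nonneg hθ.1 hω.le, div_lt_div_of_pos_right hθ.2 hω⟩, mul_div_cancel₀ θ hω.ne'⟩

lemma cubic_add_mul_exp_eq_zero_of_mul_cos_of_mul_sin {p2 p1 p0 r ω τ : ℝ}
    (hcos : r * Real.cos (ω * τ) = p2 * ω ^ 2 - p0)
    (hsin : r * Real.sin (ω * τ) = p1 * ω - ω ^ 3) :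
    (I * ω) ^ 3 + p2 * (I * ω) ^ 2 + p1 * (I * ω) + p0 + r * Complex.exp (-(I * ω) * τ) = 0 := by
  have hexp : -(I * ω) * τ = ((-(ω * τ) : ℝ) : ℂ) * I := by push_cast; ring
  have hcosC : (r : ℂ) * Complex.cos (ω * τ) = p2 * ω ^ 2 - p0 := by exact_mod_cast hcos
  have hsinC : (r : ℂ) * Complex.sin (ω * τ) = p1 * ω - ω ^ 3 := by exact_mod_cast hsin
  rw [hexp, exp_mul_I, ofReal_neg, Complex.cos_neg, Complex.sin_neg]
  push_cast
  linear_combination hcosC - I * hsinC + (ω ^ 3 * I + ω ^ 2 * p2) * I_sq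

theorem stmt_8_general (p2 p1 p0 : ℝ) (r : ℝ) (ω0 : ℝ) (hω0 : 0 < ω0)
    (h : ω0 ^ 6 + (p2 ^ 2 - 2 * p1) * ω0 ^ 4 + (p1 ^ 2 - 2 * p0 * p2) * ω0 ^ 2
        + p0 ^ 2 - r ^ 2 = 0) :
    ∃ τ0 : ℝ, 0 ≤ τ0 ∧ τ0 < 2 * Real.pi / ω0 ∧
      r * Real.cos (ω0 * τ0) = p2 * ω0 ^ 2 - p0 ∧
      r * Real.sin (ω0 * τ0) = p1 * ω0 - ω0 ^ 3 ∧
      (Complex.I * ω0) ^ 3 + p2 * (Complex.I * ω0) ^ 2 + p1 * (Complex.I * ω0)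
          + p0 + r * Complex.exp (-(Complex.I * ω0) * τ0) = 0 := by
  -- The sextic is the sum of squares of the two sides of system (14).
  have hsq : (p2 * ω0 ^ 2 - p0) ^ 2 + (p1 * ω0 - ω0 ^ 3) ^ 2 = r ^ 2 := by linear_combination h
  obtain ⟨θ, hθ, hcos, hsin⟩ := exists_mem_Ico_mul_cos_eq_mul_sin_eq hsq
  obtain ⟨τ0, ⟨hτ0, hτ0_lt⟩, rfl⟩ := exists_mem_Ico_mul_eq hω0 hθ
  exact ⟨τ0, hτ0, hτ0_lt, hcos, hsin, cubic_add_mul_exp_eq_zero_of_mul_cos_of_mul_sin hcos hsin⟩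

/-- Every positive root of the sextic admits a critical delay τ0. -/
theorem stmt_8 (p2 p1 p0 : ℝ) (r : ℝ) (hr : r ≠ 0) (ω0 : ℝ) (hω0 : 0 < ω0)
    (h : ω0 ^ 6 + (p2 ^ 2 - 2 * p1) * ω0 ^ 4 + (p1 ^ 2 - 2 * p0 * p2) * ω0 ^ 2
        + p0 ^ 2 - r ^ 2 = 0) :
    ∃ τ0 : ℝ, 0 ≤ τ0 ∧ τ0 < 2 * Real.pi / ω0 ∧
      r * Real.cos (ω0 * τ0) = p2 * ω0 ^ 2 - p0 ∧
      r * Real.sin (ω0 * τ0) = p1 * ω0 - ω0 ^ 3 ∧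
      (Complex.I * ω0) ^ 3 + p2 * (Complex.I * ω0) ^ 2 + p1 * (Complex.I * ω0)
          + p0 + r * Complex.exp (-(Complex.I * ω0) * τ0) = 0 :=
  stmt_8_general p2 p1 p0 r ω0 hω0 h
end

section
/- Let p2, p1, p0, r be real numbers, ω0 > 0 and τ0 ≥ 0, and suppose r*cos(ω0*τ0) = p2*ω0² − p0 and r*sin(ω0*τ0) = p1*ω0 − ω0³. Define l1 = (p1 − 3*ω0²)*cos(ω0*τ0) − 2*p2*ω0*sin(ω0*τ0) − r*τ0 and l2 = (p1 − 3*ω0²)*sin(ω0*τ0) + 2*p2*ω0*cos(ω0*τ0), and assume l1² + l2² ≠ 0. Then the complex number λ' = (iω0)*r / (e^{iω0*τ0}·(3*(iω0)² + 2*p2*(iω0) + p1) − r*τ0) satisfies Re(λ') = ω0*r*l2/(l1² + l2²) and Im(λ') = ω0*r*l1/(l1² + l2²); in particular, if r ≠ 0 and l2 ≠ 0 then Re(λ') ≠ 0 (the transversality condition of the Hopf bifurcation at τ = τ0). -/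
/-- Transversality condition at the Hopf bifurcation (discrete delays). -/
theorem stmt_10 (p2 p1 p0 r ω0 τ0 : ℝ) (hω0 : 0 < ω0) (hτ0 : 0 ≤ τ0)
    (h1 : r * Real.cos (ω0 * τ0) = p2 * ω0 ^ 2 - p0)
    (h2 : r * Real.sin (ω0 * τ0) = p1 * ω0 - ω0 ^ 3)
    (l1 l2 : ℝ)
    (hl1 : l1 = (p1 - 3 * ω0 ^ 2) * Real.cos (ω0 * τ0)
        - 2 * p2 * ω0 * Real.sin (ω0 * τ0) - r * τ0)
    (hl2 : l2 = (p1 - 3 * ω0 ^ 2) * Real.sin (ω0 * τ0)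
        + 2 * p2 * ω0 * Real.cos (ω0 * τ0))
    (hl : l1 ^ 2 + l2 ^ 2 ≠ 0)
    (lam' : ℂ)
    (hlam' : lam' = (Complex.I * ω0) * r /
      (Complex.exp (Complex.I * ω0 * τ0) *
          (3 * (Complex.I * ω0) ^ 2 + 2 * p2 * (Complex.I * ω0) + p1)
        - r * τ0)) :
    lam'.re = ω0 * r * l2 / (l1 ^ 2 + l2 ^ 2) ∧
    lam'.im = ω0 * r * l1 / (l1 ^ 2 + l2 ^ 2) ∧
    (r ≠ 0 → l2 ≠ 0 → lam'.re ≠ 0) := by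
  have hexp : Complex.exp (Complex.I * ω0 * τ0) =
      ((Real.cos (ω0 * τ0) : ℂ) + (Real.sin (ω0 * τ0) : ℂ) * Complex.I) := by
    rw [show Complex.I * (ω0:ℂ) * (τ0:ℂ) = ((ω0 * τ0 : ℝ):ℂ) * Complex.I by
      push_cast; ring, Complex.exp_mul_I, ← Complex.ofReal_cos, ← Complex.ofReal_sin]
  have hD : Complex.exp (Complex.I * ω0 * τ0) *
      (3 * (Complex.I * ω0) ^ 2 + 2 * p2 * (Complex.I * ω0) + p1)
      - r * τ0 = (l1:ℂ) + (l2:ℂ) * Complex.I := by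
    rw [hexp, hl1, hl2]
    push_cast
    linear_combination (3 * (ω0:ℂ) ^ 2 *
      (Complex.cos ((ω0:ℂ) * (τ0:ℂ)) + Complex.sin ((ω0:ℂ) * (τ0:ℂ)) * Complex.I)
      + 2 * (p2:ℂ) * (ω0:ℂ) * Complex.sin ((ω0:ℂ) * (τ0:ℂ))) * Complex.I_sq
  have hre : lam'.re = ω0 * r * l2 / (l1 ^ 2 + l2 ^ 2) := by
    rw [hlam', hD, Complex.div_re]
    simp [Complex.normSq_apply, Complex.mul_re, Complex.mul_im]
    ring_nf
  have him : lam'.im = ω0 * r * l1 / (l1 ^ 2 + l2 ^ 2) := by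
    rw [hlam', hD, Complex.div_im]
    simp [Complex.normSq_apply, Complex.mul_re, Complex.mul_im]
    ring_nf
  refine ⟨hre, him, fun hr hl2' => ?_⟩
  rw [hre]
  have : ω0 * r * l2 ≠ 0 := by
    exact mul_ne_zero (mul_ne_zero (ne_of_gt hω0) hr) hl2'
  exact div_ne_zero this hl
end

section
/- Let a2, b1, b2, b12, c2, d2 be positive reals, y10, y20 positive reals, ρ a real number, and τ1, τ2 ≥ 0. Define the 4×4 complex matrices A = [[−a2,0,0,0],[b1,−(b2+b12*y20),0,−b12*y10],[0,0,−c2,0],[0,0,0,−d2]], B1 the matrix whose only nonzero entry is ρ in row 3, column 2, and B2 the matrix whose only nonzero entry is 1 in row 4, column 3, and set p2 = b2+c2+d2+b12*y20, p1 = (c2+d2)*(b2+b12*y20)+c2*d2, p0 = c2*d2*(b2+b12*y20), r = ρ*b12*y10. Suppose ω0 > 0 and λ1 = iω0 satisfies λ1³ + p2*λ1² + p1*λ1 + p0 + r*e^{−λ1*(τ1+τ2)} = 0. Then the vector v = (0, −(λ1+d2)*(λ1+c2), −ρ*e^{−λ1*τ1}*(λ1+d2), −ρ*e^{−λ1*(τ1+τ2)})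 is nonzero and satisfies (A + e^{−λ1*τ1}*B1 + e^{−λ1*τ2}*B2)·v = λ1·v, i.e. v is an eigenvector with eigenvalue λ1 of the matrix of the linearized P53-Mdm2 system evaluated at the purely imaginary characteristic root. -/
open Matrix

/-- Eigenvector of the linearized P53-Mdm2 system at a purely imaginary
characteristic root (discrete delays). -/
theorem stmt_18 (a2 b1 b2 b12 c2 d2 : ℝ)
    (ha2 : 0 < a2) (hb1 : 0 < b1) (hb2 : 0 < b2) (hb12 : 0 < b12)
    (hc2 : 0 < c2) (hd2 : 0 < d2)
    (y10 y20 : ℝ) (hy10 : 0 < y10) (hy20 : 0 < y20)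
    (ρ : ℝ) (τ1 τ2 : ℝ) (hτ1 : 0 ≤ τ1) (hτ2 : 0 ≤ τ2)
    (A B1 B2 : Matrix (Fin 4) (Fin 4) ℂ)
    (hA : A = !![(-a2 : ℂ), 0, 0, 0;
                 (b1 : ℂ), -((b2 : ℂ) + b12 * y20), 0, -(b12 : ℂ) * y10;
                 0, 0, (-c2 : ℂ), 0;
                 0, 0, 0, (-d2 : ℂ)])
    (hB1 : B1 = !![(0 : ℂ), 0, 0, 0;
                   0, 0, 0, 0;
                   0, (ρ : ℂ), 0, 0;
                   0, 0, 0, 0])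
    (hB2 : B2 = !![(0 : ℂ), 0, 0, 0;
                   0, 0, 0, 0;
                   0, 0, 0, 0;
                   0, 0, (1 : ℂ), 0])
    (p2 p1 p0 r : ℝ)
    (hp2 : p2 = b2 + c2 + d2 + b12 * y20)
    (hp1 : p1 = (c2 + d2) * (b2 + b12 * y20) + c2 * d2)
    (hp0 : p0 = c2 * d2 * (b2 + b12 * y20))
    (hr : r = ρ * b12 * y10)
    (ω0 : ℝ) (hω0 : 0 < ω0)
    (lam1 : ℂ) (hlam1 : lam1 = Complex.I * ω0)
    (hroot : lam1 ^ 3 + p2 * lam1 ^ 2 + p1 * lam1 + p0 +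
        r * Complex.exp (-lam1 * (τ1 + τ2)) = 0)
    (v : Fin 4 → ℂ)
    (hv : v = ![0, -(lam1 + d2) * (lam1 + c2),
        -(ρ : ℂ) * Complex.exp (-lam1 * τ1) * (lam1 + d2),
        -(ρ : ℂ) * Complex.exp (-lam1 * (τ1 + τ2))]) :
    v ≠ 0 ∧
      (A + Complex.exp (-lam1 * τ1) • B1
        + Complex.exp (-lam1 * τ2) • B2).mulVec v = lam1 • v := by
  have hd2' : (lam1 + d2) ≠ 0 := by
    intro h
    have := congrArg Complex.re h
    simp [hlam1] at this
    exact hd2.ne' this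
  have hc2' : (lam1 + c2) ≠ 0 := by
    intro h
    have := congrArg Complex.re h
    simp [hlam1] at this
    exact hc2.ne' this
  constructor
  · intro h
    have h1 : v 1 = 0 := congrFun h 1
    rw [hv] at h1
    simp at h1
    exact h1.elim (fun h => hd2' (by linear_combination -h)) (fun h => hc2' (by linear_combination h))
  · have hexp : Complex.exp (-lam1 * τ1) * Complex.exp (-lam1 * τ2)
        = Complex.exp (-lam1 * (τ1 + τ2)) := by
      rw [← Complex.exp_add]; ring_nf
    subst hA hB1 hB2 hv hp2 hp1 hp0 hr
    funext i
    fin_cases i <;>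
      simp [Matrix.mulVec, dotProduct, Fin.sum_univ_four] <;>
      push_cast at hroot ⊢ <;> simp only [neg_mul] at hroot hexp ⊢
    · linear_combination hroot
    · ring
    · linear_combination (-(ρ : ℂ) * (lam1 + d2)) * hexp
end

section
/- Let a2, b1, b2, b12, c2, d2, q2 be positive reals, y10, y20 positive reals, ρ a nonzero real number, and τ1 ≥ 0. Define the 5×5 complex matrices A12 = [[−a2,0,0,0,0],[b1,−(b2+b12*y20),0,−b12*y10,0],[0,0,−c2,0,0],[0,0,0,−d2,1],[0,0,q2,0,−q2]] and B12 the matrix whose only nonzero entry is ρ in row 3, column 2, and set p2 = b2+c2+d2+b12*y20, p1 = (c2+d2)*(b2+b12*y20)+c2*d2, p0 = c2*d2*(b2+b12*y20), r = ρ*b12*y10. Suppose ω10 > 0 and λ1 = iω10 satisfies (λ1 + q2)*(λ1³ + p2*λ1² + p1*λ1 + p0) + r*q2*e^{−λ1*τ1} = 0. Then the vector v = (0, (λ1+q2)*(λ1+c2)*e^{λ1*τ1}/ρ, λ1+q2, q2/(λ1+d2), q2) is nonzero and satisfies (A12 + e^{−λ1*τ1}*B12)·v = λ1·v. -/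
/-!
Row by row, the eigenvalue equation for `v` reduces to scalar identities. The rows of
`A12 + e^{-λτ1} B12` for `u1`, `u4`, `u5` hold for every `λ`, and the row of `u3` holds because
`e^{-λτ1} e^{λτ1} = 1`; after multiplying by `ρ (λ + d2) e^{-λτ1}`, the row of `u2` is exactly
the characteristic equation. The only divisions are by `ρ ≠ 0` and by `λ + d2`, which has real
part `d2 > 0` since `λ` is purely imaginary.
-/

open Matrix Complex

theorem I_mul_ofReal_add_ofReal_ne_zero (ω : ℝ) {d : ℝ} (hd : d ≠ 0) :
    I * ω + d ≠ 0 := fun h => hd (by simpa using congrArg re h)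

section

variable {R : Type*} [CommRing R]

/-- `A12 + e^{-λτ1} B12`, with `σ = e^{-λτ1} ρ`, `k = b2 + b12 y20` and `β = b12 y10`. -/
def p53LinearMatrix (a2 b1 k β c2 d2 q2 σ : R) : Matrix (Fin 5) (Fin 5) R :=
  !![-a2, 0, 0, 0, 0;
     b1, -k, 0, -β, 0;
     0, σ, -c2, 0, 0;
     0, 0, 0, -d2, 1;
     0, 0, q2, 0, -q2]

theorem add_smul_eq_p53LinearMatrix (a2 b1 k β c2 d2 q2 ρ μ : R) :
    !![-a2, 0, 0, 0, 0;
       b1, -k, 0, -β, 0;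
       0, 0, -c2, 0, 0;
       0, 0, 0, -d2, 1;
       0, 0, q2, 0, -q2] +
      μ • !![0, 0, 0, 0, 0;
             0, 0, 0, 0, 0;
             0, ρ, 0, 0, 0;
             0, 0, 0, 0, 0;
             0, 0, 0, 0, 0] =
      p53LinearMatrix a2 b1 k β c2 d2 q2 (μ * ρ) := by
  ext i j
  fin_cases i <;> fin_cases j <;> simp [p53LinearMatrix]

theorem p53LinearMatrix_mulVec_eq_smul_iff (a2 b1 k β c2 d2 q2 σ lam x0 x1 x2 x3 x4 : R) :
    p53LinearMatrix a2 b1 k β c2 d2 q2 σ *ᵥ ![x0, x1, x2, x3, x4] =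
        lam • ![x0, x1, x2, x3, x4] ↔
      -a2 * x0 = lam * x0 ∧ b1 * x0 - k * x1 - β * x3 = lam * x1 ∧
        σ * x1 - c2 * x2 = lam * x2 ∧ -d2 * x3 + x4 = lam * x3 ∧
        q2 * x2 - q2 * x4 = lam * x4 := by
  simp only [funext_iff, Fin.forall_fin_succ, IsEmpty.forall_iff]
  simp [p53LinearMatrix, mulVec, dotProduct, Fin.sum_univ_five, sub_eq_add_neg]

end

theorem second_row_of_characteristic_eq {K : Type*} [Field K] {k β c d q ρ lam E E' : K}
    (hρ : ρ ≠ 0) (hd : lam + d ≠ 0) (hE : E' * E = 1)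
    (hchar : (lam + q) * ((lam + c) * (lam + d) * (lam + k)) + ρ * β * q * E' = 0) :
    -k * ((lam + q) * (lam + c) * E / ρ) - β * (q / (lam + d)) =
      lam * ((lam + q) * (lam + c) * E / ρ) := by
  field_simp
  linear_combination (-E) * hchar + ρ * β * q * hE

theorem third_row_of_mul_eq_one {K : Type*} [Field K] {c q ρ lam E E' : K} (hρ : ρ ≠ 0)
    (hE : E' * E = 1) :
    E' * ρ * ((lam + q) * (lam + c) * E / ρ) - c * (lam + q) = lam * (lam + q) := by
  field_simp
  linear_combination (lam + q) * (lam + c) * hE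

theorem stmt_19_general (a2 b1 b2 b12 c2 d2 q2 : ℝ)
    (hd2 : 0 < d2) (hq2 : 0 < q2)
    (y10 y20 : ℝ)
    (ρ : ℝ) (hρ : ρ ≠ 0) (τ1 : ℝ)
    (A12 B12 : Matrix (Fin 5) (Fin 5) ℂ)
    (hA12 : A12 = !![(-a2 : ℂ), 0, 0, 0, 0;
                 (b1 : ℂ), -((b2 : ℂ) + b12 * y20), 0, -(b12 : ℂ) * y10, 0;
                 0, 0, (-c2 : ℂ), 0, 0;
                 0, 0, 0, (-d2 : ℂ), 1;
                 0, 0, (q2 : ℂ), 0, (-q2 : ℂ)])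
    (hB12 : B12 = !![(0 : ℂ), 0, 0, 0, 0;
                   0, 0, 0, 0, 0;
                   0, (ρ : ℂ), 0, 0, 0;
                   0, 0, 0, 0, 0;
                   0, 0, 0, 0, 0])
    (p2 p1 p0 r : ℝ)
    (hp2 : p2 = b2 + c2 + d2 + b12 * y20)
    (hp1 : p1 = (c2 + d2) * (b2 + b12 * y20) + c2 * d2)
    (hp0 : p0 = c2 * d2 * (b2 + b12 * y20))
    (hr : r = ρ * b12 * y10)
    (ω10 : ℝ)
    (lam1 : ℂ) (hlam1 : lam1 = Complex.I * ω10)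
    (hroot : (lam1 + q2) * (lam1 ^ 3 + p2 * lam1 ^ 2 + p1 * lam1 + p0) +
        r * q2 * Complex.exp (-lam1 * τ1) = 0)
    (v : Fin 5 → ℂ)
    (hv : v = ![0,
        (lam1 + q2) * (lam1 + c2) * Complex.exp (lam1 * τ1) / ρ,
        lam1 + q2,
        q2 / (lam1 + d2),
        (q2 : ℂ)]) :
    v ≠ 0 ∧
      (A12 + Complex.exp (-lam1 * τ1) • B12).mulVec v = lam1 • v := by
  have hρ' : (ρ : ℂ) ≠ 0 := ofReal_ne_zero.mpr hρ
  have hd : lam1 + d2 ≠ 0 := hlam1 ▸ I_mul_ofReal_add_ofReal_ne_zero ω10 hd2.ne'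
  have hE : exp (-lam1 * τ1) * exp (lam1 * τ1) = 1 := by
    rw [← exp_add, neg_mul, neg_add_cancel, exp_zero]
  -- `p2, p1, p0` are the elementary symmetric functions of `c2, d2, b2 + b12 * y20`
  have hchar : (lam1 + q2) * ((lam1 + c2) * (lam1 + d2) * (lam1 + (b2 + b12 * y20))) +
      ρ * (b12 * y10) * q2 * exp (-lam1 * τ1) = 0 := by
    subst hp2 hp1 hp0 hr
    push_cast at hroot
    linear_combination hroot
  subst hv hA12 hB12
  refine ⟨fun h => hq2.ne' (by simpa using congrFun h 4), ?_⟩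
  simp only [neg_mul (b12 : ℂ)]
  rw [add_smul_eq_p53LinearMatrix, p53LinearMatrix_mulVec_eq_smul_iff]
  refine ⟨by ring, ?_, third_row_of_mul_eq_one hρ' hE, by field_simp; ring, by ring⟩
  rw [mul_zero, zero_sub, ← neg_mul]
  exact second_row_of_characteristic_eq hρ' hd hE hchar

/-- Eigenvector of the linearized five-dimensional P53-Mdm2 system
(weak kernel case) at a purely imaginary characteristic root. -/
theorem stmt_19 (a2 b1 b2 b12 c2 d2 q2 : ℝ)
    (ha2 : 0 < a2) (hb1 : 0 < b1) (hb2 : 0 < b2) (hb12 : 0 < b12)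
    (hc2 : 0 < c2) (hd2 : 0 < d2) (hq2 : 0 < q2)
    (y10 y20 : ℝ) (hy10 : 0 < y10) (hy20 : 0 < y20)
    (ρ : ℝ) (hρ : ρ ≠ 0) (τ1 : ℝ) (hτ1 : 0 ≤ τ1)
    (A12 B12 : Matrix (Fin 5) (Fin 5) ℂ)
    (hA12 : A12 = !![(-a2 : ℂ), 0, 0, 0, 0;
                 (b1 : ℂ), -((b2 : ℂ) + b12 * y20), 0, -(b12 : ℂ) * y10, 0;
                 0, 0, (-c2 : ℂ), 0, 0;
                 0, 0, 0, (-d2 : ℂ), 1;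
                 0, 0, (q2 : ℂ), 0, (-q2 : ℂ)])
    (hB12 : B12 = !![(0 : ℂ), 0, 0, 0, 0;
                   0, 0, 0, 0, 0;
                   0, (ρ : ℂ), 0, 0, 0;
                   0, 0, 0, 0, 0;
                   0, 0, 0, 0, 0])
    (p2 p1 p0 r : ℝ)
    (hp2 : p2 = b2 + c2 + d2 + b12 * y20)
    (hp1 : p1 = (c2 + d2) * (b2 + b12 * y20) + c2 * d2)
    (hp0 : p0 = c2 * d2 * (b2 + b12 * y20))
    (hr : r = ρ * b12 * y10)
    (ω10 : ℝ) (hω10 : 0 < ω10)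
    (lam1 : ℂ) (hlam1 : lam1 = Complex.I * ω10)
    (hroot : (lam1 + q2) * (lam1 ^ 3 + p2 * lam1 ^ 2 + p1 * lam1 + p0) +
        r * q2 * Complex.exp (-lam1 * τ1) = 0)
    (v : Fin 5 → ℂ)
    (hv : v = ![0,
        (lam1 + q2) * (lam1 + c2) * Complex.exp (lam1 * τ1) / ρ,
        lam1 + q2,
        q2 / (lam1 + d2),
        (q2 : ℂ)]) :
    v ≠ 0 ∧
      (A12 + Complex.exp (-lam1 * τ1) • B12).mulVec v = lam1 • v :=
  stmt_19_general a2 b1 b2 b12 c2 d2 q2 hd2 hq2 y10 y20 ρ hρ τ1 A12 B12 hA12 hB12 p2 p1 p0 r hp2 hp1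
    hp0 hr ω10 lam1 hlam1 hroot v hv
end
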